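/- arXiv:0807.4123 — 3 statements merged into one kernel-verified Lean document; each statement's English description precedes it below -/
import Mathlib

section
/- Let V be a commutative unital quantale and Φ a class of V-distributors satisfying (Ax1)–(Ax3). For every V-category (X,a), ΦX is closed in PX under Φ-weighted colimits: the inclusion V-functor i : ΦX → PX is Φ-cocontinuous, i.e. whenever φ : (W,d) ⇸ (Z,c) is in Φ, h : (W,d) → ΦX is a V-functor, and g : (Z,c) → ΦX satisfies g ≅ colim(φ,h) in ΦX, then i ∘ g ≅ colim(φ, i ∘ h) in PX. -/
universe u

/-- A commutative unital quantale: a complete lattice with a commutative monoid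
structure whose multiplication distributes over arbitrary suprema. -/
class CommQuantale (V : Type u) extends CompleteLattice V, CommMonoid V where
  mul_sSup : ∀ (x : V) (s : Set V), x * sSup s = ⨆ v ∈ s, x * v

variable {V : Type u} [CommQuantale V]

/-- The internal hom of the quantale: `qhom u v = sSup {w | u * w ≤ v}`. -/
def qhom (u v : V) : V := sSup {w | u * w ≤ v}

theorem mul_iSup' {ι : Sort*} (u : V) (v : ι → V) : u * (⨆ i, v i) = ⨆ i, u * v i := by
  rw [iSup, CommQuantale.mul_sSup, iSup_range]

theorem mul_mono_right' (u : V) {w w' : V} (h : w ≤ w') : u * w ≤ u * w' := by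
  have hs : sSup ({w, w'} : Set V) = w' := by
    apply le_antisymm
    · exact sSup_le (by rintro x (rfl | rfl); exacts [h, le_rfl])
    · exact le_sSup (by simp)
  have hm := CommQuantale.mul_sSup u ({w, w'} : Set V)
  rw [hs] at hm
  rw [hm]
  exact le_iSup₂ (f := fun v (_ : v ∈ ({w, w'} : Set V)) => u * v) w (by simp)

theorem mul_mono_left' {w w' : V} (h : w ≤ w') (u : V) : w * u ≤ w' * u := by
  rw [mul_comm w u, mul_comm w' u]; exact mul_mono_right' u h

theorem le_qhom_iff {u v w : V} : w ≤ qhom u v ↔ u * w ≤ v := by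
  constructor
  · intro h
    have h2 : u * qhom u v ≤ v := by
      rw [qhom, CommQuantale.mul_sSup]
      exact iSup₂_le fun w hw => hw
    exact le_trans (mul_mono_right' u h) h2
  · intro h; exact le_sSup h

theorem bot_mul' (u : V) : (⊥ : V) * u = ⊥ := by
  rw [mul_comm]
  have hm := CommQuantale.mul_sSup u (∅ : Set V)
  simpa using hm

/-- A `V`-category structure on `X`. -/
structure VCatStr (V : Type u) [CommQuantale V] (X : Type u) where
  hom : X → X → V
  refl : ∀ x, (1 : V) ≤ hom x x
  comp : ∀ x y z, hom x y * hom y z ≤ hom x z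

/-- `V`-functoriality. -/
def IsVFunctor {X Y : Type u} (a : VCatStr V X) (b : VCatStr V Y) (f : X → Y) : Prop :=
  ∀ x x', a.hom x x' ≤ b.hom (f x) (f x')

/-- `φ` is a `V`-distributor `(X,a) ⇸ (Y,b)`. -/
def IsDist {X Y : Type u} (a : VCatStr V X) (b : VCatStr V Y) (φ : X → Y → V) : Prop :=
  (∀ x' x y, a.hom x' x * φ x y ≤ φ x' y) ∧ (∀ x y y', φ x y * b.hom y y' ≤ φ x y')

/-- Composite `ψ ∘ φ` of distributors (`φ` first). -/
def dComp {X Y Z : Type u} (ψ : Y → Z → V) (φ : X → Y → V) : X → Z → V :=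
  fun x z => ⨆ y, φ x y * ψ y z

/-- The extension `γ ⟜ α`. -/
def dExt {X Y Z : Type u} (γ : X → Z → V) (α : X → Y → V) : Y → Z → V :=
  fun y z => ⨅ x, qhom (α x y) (γ x z)

/-- `f_*`. -/
def fStar {X Y : Type u} (b : VCatStr V Y) (f : X → Y) : X → Y → V :=
  fun x y => b.hom (f x) y

/-- `f^*`. -/
def fCostar {X Y : Type u} (b : VCatStr V Y) (f : X → Y) : Y → X → V :=
  fun y x => b.hom y (f x)

/-- `ψ ⊣ φ` is an adjunction of distributors, `ψ : (A,α) ⇸ (B,β)`, `φ : (B,β) ⇸ (A,α)`. -/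
def DistAdj {A B : Type u} (α : VCatStr V A) (β : VCatStr V B)
    (ψ : A → B → V) (φ : B → A → V) : Prop :=
  (∀ x x', α.hom x x' ≤ ⨆ y, ψ x y * φ y x') ∧
  (∀ y y', (⨆ x, φ y x * ψ x y') ≤ β.hom y y')

/-- `φ : (B,β) ⇸ (A,α)` is a right adjoint distributor. -/
def IsRightAdjDist {A B : Type u} (β : VCatStr V B) (α : VCatStr V A) (φ : B → A → V) : Prop :=
  ∃ ψ : A → B → V, IsDist α β ψ ∧ DistAdj α β ψ φ

/-- The pointwise order on `V`-functors. -/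
def VLe {X Y : Type u} (b : VCatStr V Y) (f g : X → Y) : Prop :=
  ∀ x, (1 : V) ≤ b.hom (f x) (g x)

/-- Equivalence of `V`-functors. -/
def VEquiv {X Y : Type u} (b : VCatStr V Y) (f g : X → Y) : Prop :=
  VLe b f g ∧ VLe b g f

def FullyFaithful {X Y : Type u} (a : VCatStr V X) (b : VCatStr V Y) (f : X → Y) : Prop :=
  ∀ x x', b.hom (f x) (f x') = a.hom x x'

def DenseF {X Y : Type u} (b : VCatStr V Y) (f : X → Y) : Prop :=
  ∀ y y', (⨆ x, b.hom y (f x) * b.hom (f x) y') = b.hom y y'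

/-- `f` is a left adjoint `V`-functor. -/
def LeftAdjointF {X Y : Type u} (a : VCatStr V X) (b : VCatStr V Y) (f : X → Y) : Prop :=
  ∃ g : Y → X, IsVFunctor b a g ∧ (∀ x, (1 : V) ≤ a.hom x (g (f x))) ∧
    (∀ y, (1 : V) ≤ b.hom (f (g y)) y)

/-- The one-point `V`-category `G`. -/
def unitCat (V : Type u) [CommQuantale V] : VCatStr V PUnit where
  hom _ _ := 1
  refl _ := le_refl 1
  comp _ _ _ := (one_mul 1).le

/-- Presheaves on `(X,a)`: distributors `(X,a) ⇸ G`. -/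
def IsPresheaf {X : Type u} (a : VCatStr V X) (ψ : X → V) : Prop :=
  ∀ x' x, a.hom x' x * ψ x ≤ ψ x'

/-- A class of `V`-distributors: for each pair of `V`-categories a predicate on maps. -/
def DistClass (V : Type u) [CommQuantale V] : Type (u + 1) :=
  ∀ ⦃X Y : Type u⦄, VCatStr V X → VCatStr V Y → (X → Y → V) → Prop

/-- The presheaf `ψ`, seen as distributor into `G`, lies in `Φ`. -/
def InPhi (Φ : DistClass V) {X : Type u} (a : VCatStr V X) (ψ : X → V) : Prop :=
  Φ a (unitCat V) (fun x _ => ψ x)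

/-- Axioms (Ax1)–(Ax3) on a class of distributors. -/
structure DistAx (Φ : DistClass V) : Prop where
  ax1 : ∀ {X Y : Type u} (a : VCatStr V X) (b : VCatStr V Y) (f : X → Y),
      IsVFunctor a b f → Φ b a (fCostar b f)
  ax2_left : ∀ {W X Y : Type u} (d : VCatStr V W) (a : VCatStr V X) (b : VCatStr V Y)
      (φ : W → Y → V) (f : X → Y), IsDist d b φ → IsVFunctor a b f → Φ d b φ →
      Φ d a (dComp (fCostar b f) φ)
  ax2_right : ∀ {X Y Z : Type u} (a : VCatStr V X) (b : VCatStr V Y) (c : VCatStr V Z)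
      (φ : X → Z → V) (f : X → Y), IsDist a c φ → IsVFunctor a b f → Φ a c φ →
      Φ b c (dComp φ (fCostar b f))
  ax2_star : ∀ {W X Z : Type u} (d : VCatStr V W) (a : VCatStr V X) (c : VCatStr V Z)
      (φ : X → Z → V) (f : W → X), IsDist a c φ → IsVFunctor d a f → Φ a c φ →
      Φ d a (fStar a f) → Φ d c (dComp φ (fStar a f))
  ax3 : ∀ {X Y : Type u} (a : VCatStr V X) (b : VCatStr V Y) (φ : X → Y → V),
      IsDist a b φ → (∀ y, Φ a (unitCat V) (fun x _ => φ x y)) → Φ a b φ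

/-- Axiom (Ax4): `f_* ∈ Φ` for every surjective `V`-functor `f`. -/
def Ax4 (Φ : DistClass V) : Prop :=
  ∀ {X Y : Type u} (a : VCatStr V X) (b : VCatStr V Y) (f : X → Y),
    IsVFunctor a b f → Function.Surjective f → Φ a b (fStar b f)

/-- `f` is `Φ`-dense. -/
def PhiDense (Φ : DistClass V) {X Y : Type u} (a : VCatStr V X) (b : VCatStr V Y)
    (f : X → Y) : Prop :=
  Φ a b (fStar b f)

/-- The `V`-category structure on `X → V`. -/
def funCat (V : Type u) [CommQuantale V] (X : Type u) : VCatStr V (X → V) where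
  hom ψ ψ' := ⨅ x, qhom (ψ x) (ψ' x)
  refl ψ := le_iInf fun x => le_qhom_iff.mpr (mul_one _).le
  comp ψ χ ω := le_iInf fun x => le_qhom_iff.mpr <| by
    calc ψ x * ((⨅ x', qhom (ψ x') (χ x')) * (⨅ x', qhom (χ x') (ω x')))
        = (ψ x * (⨅ x', qhom (ψ x') (χ x'))) * (⨅ x', qhom (χ x') (ω x')) :=
          (mul_assoc _ _ _).symm
      _ ≤ χ x * (⨅ x', qhom (χ x') (ω x')) :=
          mul_mono_left' (le_qhom_iff.mp (iInf_le (fun x' => qhom (ψ x') (χ x')) x)) _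
      _ ≤ ω x := le_qhom_iff.mp (iInf_le (fun x' => qhom (χ x') (ω x')) x)

/-- Full sub-`V`-category on a predicate. -/
def subCat {X : Type u} (a : VCatStr V X) (P : X → Prop) : VCatStr V {x : X // P x} where
  hom x y := a.hom x.1 y.1
  refl x := a.refl x.1
  comp x y z := a.comp x.1 y.1 z.1

/-- Carrier of the presheaf `V`-category `PX`. -/
def PCarrier {X : Type u} (a : VCatStr V X) : Type u := {ψ : X → V // IsPresheaf a ψ}

/-- The presheaf `V`-category `PX`. -/
def pCat {X : Type u} (a : VCatStr V X) : VCatStr V (PCarrier a) :=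
  subCat (funCat V X) (IsPresheaf a)

/-- Carrier of `ΦX`: presheaves lying in `Φ`. -/
def PhiCarrier (Φ : DistClass V) {X : Type u} (a : VCatStr V X) : Type u :=
  {ψ : X → V // IsPresheaf a ψ ∧ InPhi Φ a ψ}

/-- The `V`-category `ΦX`. -/
def phiCat (Φ : DistClass V) {X : Type u} (a : VCatStr V X) : VCatStr V (PhiCarrier Φ a) :=
  subCat (funCat V X) fun ψ => IsPresheaf a ψ ∧ InPhi Φ a ψ

/-- The inclusion `ΦX → PX`. -/
def phiIncl (Φ : DistClass V) {X : Type u} (a : VCatStr V X) : PhiCarrier Φ a → PCarrier a :=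
  fun ψ => ⟨ψ.1, ψ.2.1⟩

/-- The corestricted Yoneda functor `y^Φ_X : X → ΦX`. -/
def yPhi (Φ : DistClass V) (hΦ : DistAx Φ) {X : Type u} (a : VCatStr V X) (x : X) :
    PhiCarrier Φ a :=
  ⟨fun x' => a.hom x' x,
   fun x' x'' => a.comp x' x'' x,
   hΦ.ax1 (unitCat V) a (fun _ => x) (fun _ _ => a.refl x)⟩

/-- `Φf : ΦX → ΦY`, `ψ ↦ ψ ∘ f^*`. -/
def phiMap (Φ : DistClass V) (hΦ : DistAx Φ) {X Y : Type u} (a : VCatStr V X) (b : VCatStr V Y)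
    (f : X → Y) (hf : IsVFunctor a b f) (ψ : PhiCarrier Φ a) : PhiCarrier Φ b :=
  ⟨fun y => ⨆ x, b.hom y (f x) * ψ.1 x,
   by
    intro y' y
    rw [mul_iSup']
    refine iSup_le fun x => ?_
    refine le_trans ?_ (le_iSup _ x)
    calc b.hom y' y * (b.hom y (f x) * ψ.1 x)
        = (b.hom y' y * b.hom y (f x)) * ψ.1 x := (mul_assoc _ _ _).symm
      _ ≤ b.hom y' (f x) * ψ.1 x := mul_mono_left' (b.comp y' y (f x)) _,
   by
    have hd : IsDist a (unitCat V) (fun x (_ : PUnit) => ψ.1 x) :=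
      ⟨fun x' x _ => ψ.2.1 x' x, fun x _ _ => le_of_eq (mul_one _)⟩
    exact hΦ.ax2_right a b (unitCat V) _ f hd hf ψ.2.2⟩

/-- `g` is the `φ`-weighted colimit of `h`, i.e. `g_* = h_* ⟜ φ`. -/
def IsColimit {Y Z X : Type u} (_b : VCatStr V Y) (_c : VCatStr V Z) (a : VCatStr V X)
    (φ : Y → Z → V) (h : Y → X) (g : Z → X) : Prop :=
  ∀ z x, a.hom (g z) x = ⨅ y, qhom (φ y z) (a.hom (h y) x)

/-- `Φ`-cocompleteness. -/
def PhiCocomplete (Φ : DistClass V) {X : Type u} (a : VCatStr V X) : Prop :=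
  ∀ ⦃Y Z : Type u⦄ (b : VCatStr V Y) (c : VCatStr V Z) (φ : Y → Z → V) (h : Y → X),
    IsDist b c φ → Φ b c φ → IsVFunctor b a h →
    ∃ g : Z → X, IsVFunctor c a g ∧ IsColimit b c a φ h g

/-- `Φ`-cocontinuity. -/
def PhiCocontinuous (Φ : DistClass V) {X X' : Type u} (a : VCatStr V X) (a' : VCatStr V X')
    (f : X → X') : Prop :=
  ∀ ⦃Y Z : Type u⦄ (b : VCatStr V Y) (c : VCatStr V Z) (φ : Y → Z → V) (h : Y → X) (g : Z → X),
    IsDist b c φ → Φ b c φ → IsVFunctor b a h → IsVFunctor c a g →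
    IsColimit b c a φ h g → IsColimit b c a' φ (f ∘ h) (f ∘ g)

/-- `Φ`-injectivity. -/
def PhiInjective (Φ : DistClass V) {X : Type u} (a : VCatStr V X) : Prop :=
  ∀ ⦃A B : Type u⦄ (α : VCatStr V A) (β : VCatStr V B) (f : A → X) (i : A → B),
    IsVFunctor α a f → IsVFunctor α β i → FullyFaithful α β i → PhiDense Φ α β i →
    ∃ g : B → X, IsVFunctor β a g ∧ VEquiv a (g ∘ i) f

/-- Separatedness. -/
def Separated {X : Type u} (a : VCatStr V X) : Prop :=
  ∀ ⦃Y : Type u⦄ (b : VCatStr V Y) (f g : Y → X),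
    IsVFunctor b a f → IsVFunctor b a g → VEquiv a f g → f = g

/-!
The colimit of `h` weighted by `φ` in `PX` is computed pointwise: `L z = ⨆ w, h w ⊗ φ w z`.
Everything hinges on `L z` lying in `ΦX` already. With `y : X → ΦX` the corestricted Yoneda
embedding, `L` is the distributor `(φ ∘ h^*) ∘ y_*`; the Yoneda lemma and (Ax3) give `y_* ∈ Φ`,
so (Ax2) puts `L` in `Φ`, and composing with `z^*` puts each column `L z` in `Φ`. The colimit
`g z` in `ΦX` and `L z` then represent the same functor on `ΦX`, which contains both, so they are
equal, and `g` is the colimit in `PX` as well.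
-/

instance : IsQuantale V where
  mul_sSup_distrib := CommQuantale.mul_sSup
  sSup_mul_distrib s x := by
    rw [mul_comm, CommQuantale.mul_sSup]
    simp only [mul_comm x]

theorem mul_qhom_le (u v : V) : u * qhom u v ≤ v := le_qhom_iff.mp le_rfl

theorem one_le_qhom_iff {u v : V} : (1 : V) ≤ qhom u v ↔ u ≤ v := by
  rw [le_qhom_iff, mul_one]

section FunCat

variable {X : Type u}

theorem one_le_funCat_hom_iff {f f' : X → V} : (1 : V) ≤ (funCat V X).hom f f' ↔ f ≤ f' := by
  simp only [funCat, le_iInf_iff, one_le_qhom_iff, Pi.le_def]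

theorem funCat_hom_iSup_mul {ι : Type u} (f : ι → X → V) (c : ι → V) (ψ : X → V) :
    (funCat V X).hom (fun x => ⨆ i, f i x * c i) ψ =
      ⨅ i, qhom (c i) ((funCat V X).hom (f i) ψ) := by
  refine le_antisymm (le_iInf fun i => le_qhom_iff.mpr <| le_iInf fun x => le_qhom_iff.mpr ?_)
    (le_iInf fun x => le_qhom_iff.mpr ?_)
  · calc f i x * (c i * (funCat V X).hom (fun x => ⨆ i, f i x * c i) ψ)
        = (f i x * c i) * (funCat V X).hom (fun x => ⨆ i, f i x * c i) ψ :=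
          (mul_assoc _ _ _).symm
      _ ≤ (⨆ i, f i x * c i) * qhom (⨆ i, f i x * c i) (ψ x) := by
        gcongr
        · exact le_iSup (fun i => f i x * c i) i
        · exact iInf_le _ x
      _ ≤ ψ x := mul_qhom_le _ _
  · rw [Quantale.iSup_mul_distrib]
    refine iSup_le fun i => ?_
    calc f i x * c i * ⨅ i, qhom (c i) ((funCat V X).hom (f i) ψ)
        ≤ f i x * (c i * qhom (c i) ((funCat V X).hom (f i) ψ)) := by
          rw [mul_assoc]
          gcongr
          exact iInf_le _ i
      _ ≤ f i x * qhom (f i x) (ψ x) := by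
          gcongr
          exact (mul_qhom_le _ _).trans (iInf_le _ x)
      _ ≤ ψ x := mul_qhom_le _ _

theorem funCat_eq_of_hom_eq {P : (X → V) → Prop} {f f' : X → V} (hf : P f)
    (hf' : P f') (h : ∀ χ, P χ → (funCat V X).hom f χ = (funCat V X).hom f' χ) : f = f' := by
  refine le_antisymm (one_le_funCat_hom_iff.mp ?_) (one_le_funCat_hom_iff.mp ?_)
  · exact (h f' hf').symm ▸ (funCat V X).refl f'
  · exact h f hf ▸ (funCat V X).refl f

theorem IsPresheaf.funCat_hom_yoneda {a : VCatStr V X} {ψ : X → V}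
    (hψ : IsPresheaf a ψ) (x : X) : (funCat V X).hom (fun x' => a.hom x' x) ψ = ψ x := by
  refine le_antisymm ((iInf_le _ x).trans ?_) (le_iInf fun x' => le_qhom_iff.mpr (hψ x' x))
  exact (le_mul_of_one_le_left' (a.refl x)).trans (mul_qhom_le _ _)

end FunCat

section Distributors

variable {X Y Z : Type u} {a : VCatStr V X} {b : VCatStr V Y} {c : VCatStr V Z}

theorem IsVFunctor.isDist_fStar {f : X → Y} (hf : IsVFunctor a b f) :
    IsDist a b (fStar b f) :=
  ⟨fun x' x _ => (mul_le_mul_left (hf x' x) _).trans (b.comp _ _ _), fun _ _ _ => b.comp _ _ _⟩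

theorem IsVFunctor.isDist_fCostar {f : X → Y} (hf : IsVFunctor a b f) :
    IsDist b a (fCostar b f) :=
  ⟨fun _ _ _ => b.comp _ _ _, fun _ x x' => (mul_le_mul_right (hf x x') _).trans (b.comp _ _ _)⟩

theorem IsDist.comp {φ : X → Y → V} {ψ : Y → Z → V} (hφ : IsDist a b φ) (hψ : IsDist b c ψ) :
    IsDist a c (dComp ψ φ) := by
  constructor
  · intro x' x z
    rw [dComp, mul_iSup']
    refine iSup_mono fun y => ?_
    rw [← mul_assoc]
    exact mul_le_mul_left (hφ.1 x' x y) _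
  · intro x z z'
    rw [dComp, Quantale.iSup_mul_distrib]
    refine iSup_mono fun y => ?_
    rw [mul_assoc]
    exact mul_le_mul_right (hψ.2 y z z') _

theorem IsDist.dComp_fCostar_const {φ : X → Y → V} (hφ : IsDist a b φ) (y : Y) :
    dComp (fCostar b fun _ : PUnit => y) φ = fun x _ => φ x y := by
  funext x _
  refine le_antisymm (iSup_le fun y' => hφ.2 x y' y) ?_
  exact (le_mul_of_one_le_right' (b.refl y)).trans (le_iSup (fun y' => φ x y' * b.hom y' y) y)

end Distributors

def presheafColim {W Z X : Type u} (φ : W → Z → V) (h : W → X → V) (z : Z) (x : X) : V :=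
  ⨆ w, h w x * φ w z

theorem isPresheaf_presheafColim {W Z X : Type u} {a : VCatStr V X} (φ : W → Z → V)
    {h : W → X → V} (hh : ∀ w, IsPresheaf a (h w)) (z : Z) :
    IsPresheaf a (presheafColim φ h z) := by
  intro x' x
  rw [presheafColim, mul_iSup']
  refine iSup_mono fun w => ?_
  rw [← mul_assoc]
  exact mul_le_mul_left (hh w x' x) _

theorem funCat_hom_presheafColim {W Z X : Type u} (φ : W → Z → V) (h : W → X → V) (z : Z)
    (ψ : X → V) : (funCat V X).hom (presheafColim φ h z) ψ =
      ⨅ w, qhom (φ w z) ((funCat V X).hom (h w) ψ) :=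
  funCat_hom_iSup_mul h (fun w => φ w z) ψ

namespace DistAx

variable {Φ : DistClass V} (hΦ : DistAx Φ) {X : Type u} (a : VCatStr V X)

include hΦ in
theorem column_mem {W Z : Type u} {d : VCatStr V W} {c : VCatStr V Z} {φ : W → Z → V}
    (hφ : IsDist d c φ) (hφΦ : Φ d c φ) (z : Z) : InPhi Φ d fun w => φ w z := by
  have := hΦ.ax2_left d (unitCat V) c φ (fun _ => z) hφ (fun _ _ => c.refl z) hφΦ
  rwa [hφ.dComp_fCostar_const] at this

theorem isVFunctor_yPhi : IsVFunctor a (phiCat Φ a) (yPhi Φ hΦ a) :=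
  fun x x' => le_iInf fun x'' => le_qhom_iff.mpr (a.comp x'' x x')

theorem fStar_yPhi_apply (x : X) (ψ : PhiCarrier Φ a) :
    fStar (phiCat Φ a) (yPhi Φ hΦ a) x ψ = ψ.1 x :=
  ψ.2.1.funCat_hom_yoneda x

theorem phiDense_yPhi : PhiDense Φ a (phiCat Φ a) (yPhi Φ hΦ a) := by
  refine hΦ.ax3 a (phiCat Φ a) _ (IsVFunctor.isDist_fStar (hΦ.isVFunctor_yPhi a)) fun ψ => ?_
  simpa only [InPhi, hΦ.fStar_yPhi_apply] using ψ.2.2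

theorem dComp_fStar_yPhi {W Z : Type u} (φ : W → Z → V) (h : W → PhiCarrier Φ a) :
    dComp (dComp φ (fCostar (phiCat Φ a) h)) (fStar (phiCat Φ a) (yPhi Φ hΦ a)) =
      fun x z => presheafColim φ (fun w => (h w).1) z x := by
  funext x z
  simp only [dComp, fStar_yPhi_apply, presheafColim, mul_iSup', ← mul_assoc]
  refine le_antisymm (iSup_le fun ψ => iSup_mono fun w => mul_le_mul_left ?_ _) ?_
  · exact (mul_le_mul_right (iInf_le _ x) _).trans (mul_qhom_le _ _)
  · refine iSup_le fun w => le_iSup_of_le (h w) (le_iSup_of_le w ?_)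
    exact mul_le_mul_left (le_mul_of_one_le_right' ((phiCat Φ a).refl (h w))) _

include hΦ in
theorem inPhi_presheafColim {W Z : Type u} {d : VCatStr V W} {c : VCatStr V Z}
    {φ : W → Z → V} (hφ : IsDist d c φ) (hφΦ : Φ d c φ) {h : W → PhiCarrier Φ a}
    (hh : IsVFunctor d (phiCat Φ a) h) (z : Z) :
    InPhi Φ a (presheafColim φ (fun w => (h w).1) z) := by
  have hφh : IsDist (phiCat Φ a) c (dComp φ (fCostar (phiCat Φ a) h)) :=
    hh.isDist_fCostar.comp hφ
  have := hΦ.ax2_star a (phiCat Φ a) c _ (yPhi Φ hΦ a) hφh (hΦ.isVFunctor_yPhi a)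
    (hΦ.ax2_right d (phiCat Φ a) c φ h hφ hh hφΦ) (hΦ.phiDense_yPhi a)
  have hdist := (IsVFunctor.isDist_fStar (hΦ.isVFunctor_yPhi a)).comp hφh
  rw [hΦ.dComp_fStar_yPhi] at this hdist
  exact hΦ.column_mem hdist this z

include hΦ in
theorem phiColim_eq_presheafColim {W Z : Type u} {d : VCatStr V W} {c : VCatStr V Z}
    {φ : W → Z → V} (hφ : IsDist d c φ) (hφΦ : Φ d c φ) {h : W → PhiCarrier Φ a}
    {g : Z → PhiCarrier Φ a} (hh : IsVFunctor d (phiCat Φ a) h) (hcol : IsColimit d c (phiCat Φ a) φ h g) (z : Z) :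
    (g z).1 = presheafColim φ (fun w => (h w).1) z := by
  refine funCat_eq_of_hom_eq (P := fun ψ => IsPresheaf a ψ ∧ InPhi Φ a ψ) (g z).2
    ⟨isPresheaf_presheafColim φ (fun w => (h w).2.1) z, inPhi_presheafColim hΦ a hφ hφΦ hh z⟩
    fun χ hχ => ?_
  rw [funCat_hom_presheafColim]
  exact hcol z ⟨χ, hχ⟩

end DistAx

/-- `ΦX` is closed in `PX` under `Φ`-weighted colimits: the inclusion is
`Φ`-cocontinuous. -/
theorem stmt15 (Φ : DistClass V) (hΦ : DistAx Φ) {X : Type u} (a : VCatStr V X) :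
    ∀ ⦃W Z : Type u⦄ (d : VCatStr V W) (c : VCatStr V Z) (φ : W → Z → V)
      (h : W → PhiCarrier Φ a) (g : Z → PhiCarrier Φ a),
      IsDist d c φ → Φ d c φ →
      IsVFunctor d (phiCat Φ a) h → IsVFunctor c (phiCat Φ a) g →
      IsColimit d c (phiCat Φ a) φ h g →
      IsColimit d c (pCat a) φ (phiIncl Φ a ∘ h) (phiIncl Φ a ∘ g) := by
  intro W Z d c φ h g hφ hφΦ hh _ hcol z ψ
  change (funCat V X).hom (g z).1 ψ.1 = ⨅ w, qhom (φ w z) ((funCat V X).hom (h w).1 ψ.1)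
  rw [hΦ.phiColim_eq_presheafColim a hφ hφΦ hh hcol z, funCat_hom_presheafColim]
end

section
/- Let V be a commutative unital quantale. Call a V-distributor φ : (X,a) ⇸ (Y,b) inhabited if k ≤ ⨆ x, φ x y for every y ∈ Y. Then the class of inhabited V-distributors satisfies the axioms (Ax1), (Ax2), (Ax3) and (Ax4): (Ax1) f^* is inhabited for every V-functor f; (Ax2) if φ is inhabited and f is a V-functor then f^* ∘ φ and φ ∘ f^* are inhabited (when defined), and φ ∘ f_* is inhabited whenever moreover f_* is inhabited; (Ax3) if for every y ∈ Y the presheaf φ (—) y : (X,a) ⇸ G is inhabited, then φ is inhabited; (Ax4) f_* is inhabited for every surjective V-functor f. -/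
universe u

variable {V : Type u} [CommQuantale V]

/-- The class of inhabited `V`-distributors. -/
def InhabD (V : Type u) [CommQuantale V] : DistClass V :=
  fun _ _ _ _ φ => ∀ y, (1 : V) ≤ ⨆ x, φ x y

/-! Inhabitedness of `φ` says that the unit `k` lies below every column supremum `⨆ x, φ x y`.
Since `k ≤ b y y`, the distributors `f^*`, and `f_*` for surjective `f`, are inhabited. Because `⊗`
distributes over suprema, a composite of inhabited distributors is inhabited, and every instance
of (Ax2) is such a composite with `f^*` or `f_*` as one factor. -/

theorem iSup_mul' {ι : Sort*} (v : ι → V) (u : V) : (⨆ i, v i) * u = ⨆ i, v i * u := by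
  simp only [mul_comm _ u, mul_iSup']

theorem inhabD_fCostar {X Y : Type u} {a : VCatStr V X} (b : VCatStr V Y) (f : X → Y) :
    InhabD V b a (fCostar b f) :=
  fun x => le_iSup_of_le (f x) (b.refl (f x))

theorem inhabD_fStar_of_surjective {X Y : Type u} {a : VCatStr V X} (b : VCatStr V Y) {f : X → Y}
    (hf : Function.Surjective f) : InhabD V a b (fStar b f) := by
  intro y
  obtain ⟨x, rfl⟩ := hf y
  exact le_iSup_of_le x (b.refl (f x))

theorem inhabD_dComp {X Y Z : Type u} {a : VCatStr V X} {b : VCatStr V Y} {c : VCatStr V Z}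
    {φ : X → Y → V} {ψ : Y → Z → V} (hφ : InhabD V a b φ) (hψ : InhabD V b c ψ) :
    InhabD V a c (dComp ψ φ) := fun z =>
  calc (1 : V) ≤ ⨆ y, ψ y z := hψ z
    _ = ⨆ y, 1 * ψ y z := by simp only [one_mul]
    _ ≤ ⨆ y, (⨆ x, φ x y) * ψ y z := iSup_mono fun y => mul_mono_left' (hφ y) _
    _ = ⨆ x, ⨆ y, φ x y * ψ y z := by simp only [iSup_mul']; exact iSup_comm

/-- The class of inhabited distributors satisfies (Ax1)–(Ax4). -/
theorem stmt18 (V : Type u) [CommQuantale V] :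
    DistAx (InhabD V) ∧ Ax4 (InhabD V) :=
  ⟨{ ax1 := fun _ b f _ => inhabD_fCostar b f
     ax2_left := fun _ _ b _ f _ _ hφ => inhabD_dComp hφ (inhabD_fCostar b f)
     ax2_right := fun _ b _ _ f _ _ hφ => inhabD_dComp (inhabD_fCostar b f) hφ
     ax2_star := fun _ _ _ _ _ _ _ hφ hf => inhabD_dComp hf hφ
     ax3 := fun _ _ _ _ h y => h y PUnit.unit },
   fun _ b _ _ hf => inhabD_fStar_of_surjective b hf⟩
end

section
/- Let V be a commutative unital quantale. Let φ : (Y,b) ⇸ (Z,c) be a right adjoint V-distributor, h : (Y,b) → (X,a) a V-functor, and g : (Z,c) → (X,a) a V-functor with g_* = h_* ⟜ φ (i.e. g ≅ colim(φ,h)). Then for every V-functor f : (X,a) → (W,w) one has (f ∘ g)_* = (f ∘ h)_* ⟜ φ (i.e. f ∘ g ≅ colim(φ, f ∘ h)); in other words, colimits weighted by right adjoint distributors are absolute: they are preserved by every V-functor. -/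
/-!
If `ψ ⊣ φ`, then extending a distributor along `φ` is the same as composing it with `ψ`.
Hence `g_* = h_* ⟜ φ = h_* ∘ ψ`, and since `(-)_*` turns composition of `V`-functors into
composition of distributors,
`(f ∘ g)_* = f_* ∘ g_* = f_* ∘ h_* ∘ ψ = (f ∘ h)_* ∘ ψ = (f ∘ h)_* ⟜ φ`.
-/

universe u

variable {V : Type u} [CommQuantale V]

theorem dComp_assoc {A B C D : Type u} (γ : C → D → V) (β : B → C → V) (α : A → B → V) :
    dComp γ (dComp β α) = dComp (dComp γ β) α := by
  funext x t
  simp only [dComp, iSup_mul', mul_iSup', mul_assoc]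
  exact iSup_comm

theorem IsVFunctor.comp {X Y Z : Type u} {a : VCatStr V X} {b : VCatStr V Y} {c : VCatStr V Z}
    {g : Y → Z} {f : X → Y} (hg : IsVFunctor b c g) (hf : IsVFunctor a b f) :
    IsVFunctor a c (g ∘ f) :=
  fun x x' => (hf x x').trans (hg _ _)

theorem IsVFunctor.hom_mul_fStar_le {X Y : Type u} {a : VCatStr V X} {b : VCatStr V Y}
    {f : X → Y} (hf : IsVFunctor a b f) (x' x : X) (y : Y) :
    a.hom x' x * fStar b f x y ≤ fStar b f x' y :=
  (mul_mono_left' (hf x' x) _).trans (b.comp _ _ _)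

theorem IsVFunctor.fStar_comp {X Y Z : Type u} {a : VCatStr V X} {b : VCatStr V Y}
    {f : X → Y} (hf : IsVFunctor a b f) (g : Z → X) :
    fStar b (f ∘ g) = dComp (fStar b f) (fStar a g) := by
  funext z y
  apply le_antisymm
  · calc fStar b (f ∘ g) z y = 1 * b.hom (f (g z)) y := (one_mul _).symm
      _ ≤ a.hom (g z) (g z) * b.hom (f (g z)) y := mul_mono_left' (a.refl _) _
      _ ≤ dComp (fStar b f) (fStar a g) z y :=
          le_iSup (fun x => a.hom (g z) x * b.hom (f x) y) (g z)
  · exact iSup_le fun x => (mul_mono_left' (hf _ _) _).trans (b.comp _ _ _)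

theorem dExt_eq_dComp_of_distAdj {A B C : Type u} {α : VCatStr V A} (β : VCatStr V B)
    {ψ : A → B → V} {φ : B → A → V} (hadj : DistAdj α β ψ φ) {γ : B → C → V}
    (hγ : ∀ y' y x, β.hom y' y * γ y x ≤ γ y' x) :
    dExt γ φ = dComp γ ψ := by
  funext z x
  apply le_antisymm
  · have hunit : (1 : V) ≤ ⨆ y, ψ z y * φ y z := (α.refl z).trans (hadj.1 z z)
    calc dExt γ φ z x = 1 * dExt γ φ z x := (one_mul _).symm
      _ ≤ (⨆ y, ψ z y * φ y z) * dExt γ φ z x := mul_mono_left' hunit _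
      _ = ⨆ y, ψ z y * (φ y z * dExt γ φ z x) := by simp only [iSup_mul', mul_assoc]
      _ ≤ dComp γ ψ z x := iSup_mono fun y =>
          mul_mono_right' _ (le_qhom_iff.mp (iInf_le (fun y => qhom (φ y z) (γ y x)) y))
  · refine iSup_le fun y => le_iInf fun y' => le_qhom_iff.mpr ?_
    have hcounit : φ y' z * ψ z y ≤ β.hom y' y :=
      (le_iSup (fun z' => φ y' z' * ψ z' y) z).trans (hadj.2 y' y)
    calc φ y' z * (ψ z y * γ y x) = φ y' z * ψ z y * γ y x := (mul_assoc _ _ _).symm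
      _ ≤ β.hom y' y * γ y x := mul_mono_left' hcounit _
      _ ≤ γ y' x := hγ y' y x

theorem isColimit_iff_fStar_eq_dExt {Y Z X : Type u} (b : VCatStr V Y) (c : VCatStr V Z)
    (a : VCatStr V X) (φ : Y → Z → V) (h : Y → X) (g : Z → X) :
    IsColimit b c a φ h g ↔ fStar a g = dExt (fStar a h) φ := by
  simp only [funext_iff]
  rfl

theorem stmt19_general {Y Z X W : Type u}
    (b : VCatStr V Y) (c : VCatStr V Z) (a : VCatStr V X) (w : VCatStr V W)
    (φ : Y → Z → V) (h : Y → X) (g : Z → X) (f : X → W)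
    (hra : IsRightAdjDist b c φ)
    (hh : IsVFunctor b a h) (hf : IsVFunctor a w f)
    (hcol : IsColimit b c a φ h g) :
    IsColimit b c w φ (f ∘ h) (f ∘ g) := by
  obtain ⟨ψ, -, hadj⟩ := hra
  have hg : fStar a g = dComp (fStar a h) ψ := by
    rw [← dExt_eq_dComp_of_distAdj b hadj hh.hom_mul_fStar_le]
    exact (isColimit_iff_fStar_eq_dExt b c a φ h g).mp hcol
  rw [isColimit_iff_fStar_eq_dExt,
    dExt_eq_dComp_of_distAdj b hadj (hf.comp hh).hom_mul_fStar_le,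
    hf.fStar_comp g, hg, hf.fStar_comp h, dComp_assoc]

/-- Colimits weighted by right adjoint distributors are absolute. -/
theorem stmt19 {Y Z X W : Type u}
    (b : VCatStr V Y) (c : VCatStr V Z) (a : VCatStr V X) (w : VCatStr V W)
    (φ : Y → Z → V) (h : Y → X) (g : Z → X) (f : X → W)
    (hφ : IsDist b c φ) (hra : IsRightAdjDist b c φ)
    (hh : IsVFunctor b a h) (hg : IsVFunctor c a g) (hf : IsVFunctor a w f)
    (hcol : IsColimit b c a φ h g) :
    IsColimit b c w φ (f ∘ h) (f ∘ g) :=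
  stmt19_general b c a w φ h g f hra hh hf hcol
end
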